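/- The tent map T(x) = 1 − |2x − 1| is chaotic on [0,1]; that is, there exists δ > 0 such that for every point x ∈ [0,1] and every nonempty open set V ⊆ [0,1] there is a point y ∈ V with limsup_{n→∞} |Tⁿ(x) − Tⁿ(y)| ≥ δ and liminf_{n→∞} |Tⁿ(x) − Tⁿ(y)| = 0. -/

import Mathlib

open Filter

/-- The tent map `T(x) = 1 - |2x - 1|`. -/
noncomputable def tentMap (x : ℝ) : ℝ := 1 - |2 * x - 1|

/-!
`Tʲ` maps every dyadic interval `[k/2ʲ, (k+1)/2ʲ]` onto `[0,1]`, since it sends the endpoints to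
`k mod 2` and `(k+1) mod 2`. Hence every nonempty open subset of `[0,1]` is mapped onto `[0,1]` by
all large iterates, so for fixed `x` and any open targets `O n` meeting `[0,1]`, the `y` with
`Tⁿy ∈ O n` for infinitely many `n` form a residual subset of `[0,1]`. Taking `O n` to be the balls
of radius `1/(i+1)` around `Tⁿx`, and the complements of the closed `1/4`-balls around `Tⁿx`, the
Baire category theorem yields the required `y` in every open set.
-/

open Set Metric

lemma continuous_tentMap : Continuous tentMap := by
  unfold tentMap
  fun_prop

lemma tentMap_mapsTo : MapsTo tentMap (Icc 0 1) (Icc 0 1) := by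
  intro u ⟨h0, h1⟩
  have : |2 * u - 1| ≤ 1 := abs_le.2 ⟨by linarith, by linarith⟩
  exact ⟨by unfold tentMap; linarith, by unfold tentMap; linarith [abs_nonneg (2 * u - 1)]⟩

lemma tentMap_iterate_dyadic {j k : ℕ} (hk : k ≤ 2 ^ j) :
    tentMap^[j] (k / 2 ^ j) = (k % 2 : ℕ) := by
  induction j generalizing k with
  | zero => interval_cases k <;> simp
  | succ j ih =>
    rw [Function.iterate_succ_apply]
    rcases le_or_gt k (2 ^ j) with hkj | hkj
    · have hT : tentMap (k / 2 ^ (j + 1)) = k / 2 ^ j := by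
        have : (k : ℝ) ≤ 2 ^ j := by exact_mod_cast hkj
        rw [tentMap, abs_of_nonpos]
        · field_simp; ring
        · rw [pow_succ]; field_simp; linarith
      rw [hT, ih hkj]
    · have hk' : 2 ^ (j + 1) - k ≤ 2 ^ j := by rw [pow_succ] at hk ⊢; omega
      have hT : tentMap (k / 2 ^ (j + 1)) = ((2 ^ (j + 1) - k : ℕ) : ℝ) / 2 ^ j := by
        have : (2 : ℝ) ^ j ≤ k := by exact_mod_cast hkj.le
        rw [tentMap, abs_of_nonneg, Nat.cast_sub hk]
        · push_cast; field_simp; ring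
        · rw [pow_succ]; field_simp; linarith
      rw [hT, ih hk']
      congr 1
      rw [pow_succ] at hk ⊢
      generalize 2 ^ j = M at hk hkj ⊢
      omega

lemma Icc_subset_image_iterate_dyadic {j k : ℕ} (hk : k + 1 ≤ 2 ^ j) :
    Icc 0 1 ⊆ tentMap^[j] '' Icc ((k : ℝ) / 2 ^ j) (((k : ℝ) + 1) / 2 ^ j) := by
  have hle : (k : ℝ) / 2 ^ j ≤ (k + 1) / 2 ^ j := by gcongr; linarith
  have hleft := tentMap_iterate_dyadic (j := j) (k := k) (by omega)
  have hright := tentMap_iterate_dyadic hk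
  push_cast at hright
  rw [← uIcc_of_le hle]
  refine subset_trans ?_ (intermediate_value_uIcc (continuous_tentMap.iterate j).continuousOn)
  rw [hleft, hright]
  rcases Nat.mod_two_eq_zero_or_one k with h | h
  · rw [h, show (k + 1) % 2 = 1 by omega]
    simp
  · rw [h, show (k + 1) % 2 = 0 by omega]
    simp

lemma eventually_exists_dyadic_Icc_subset {a b : ℝ} (ha : 0 ≤ a) (hab : a < b) :
    ∀ᶠ j : ℕ in atTop, ∃ k : ℕ, Icc ((k : ℝ) / 2 ^ j) (((k : ℝ) + 1) / 2 ^ j) ⊆ Ioo a b := by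
  obtain ⟨j₀, hj₀⟩ := pow_unbounded_of_one_lt (2 / (b - a)) one_lt_two
  filter_upwards [eventually_ge_atTop j₀] with j hj
  have hpos : (0 : ℝ) < 2 ^ j := by positivity
  have hwide : a * 2 ^ j + 2 < b * 2 ^ j := by
    have := hj₀.trans_le (pow_le_pow_right₀ one_le_two hj)
    rw [div_lt_iff₀ (sub_pos.2 hab)] at this
    linarith
  refine ⟨⌊a * 2 ^ j⌋₊ + 1, Icc_subset_Ioo ?_ ?_⟩
  · push_cast
    rw [lt_div_iff₀ hpos]
    exact Nat.lt_floor_add_one _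
  · push_cast
    rw [div_lt_iff₀ hpos]
    linarith [Nat.floor_le (by positivity : 0 ≤ a * 2 ^ j)]

lemma IsOpen.inter_Ioo_nonempty_of_inter_Icc {W : Set ℝ} (hW : IsOpen W)
    (hne : (W ∩ Icc 0 1).Nonempty) : (W ∩ Ioo 0 1).Nonempty := by
  rwa [inter_comm, ← closure_Ioo zero_ne_one, closure_inter_open_nonempty_iff hW,
    inter_comm] at hne

lemma eventually_Icc_subset_image_iterate {W : Set ℝ} (hW : IsOpen W)
    (hne : (W ∩ Icc 0 1).Nonempty) :
    ∀ᶠ n in atTop, Icc 0 1 ⊆ tentMap^[n] '' (W ∩ Icc 0 1) := by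
  obtain ⟨w, hw⟩ := hW.inter_Ioo_nonempty_of_inter_Icc hne
  obtain ⟨a, b, hwab, hab⟩ :=
    mem_nhds_iff_exists_Ioo_subset.1 ((hW.inter isOpen_Ioo).mem_nhds hw)
  have hlt : a < b := hwab.1.trans hwab.2
  obtain ⟨ha, hb⟩ := (Ioo_subset_Ioo_iff hlt).1 (hab.trans inter_subset_right)
  filter_upwards [eventually_exists_dyadic_Icc_subset ha hlt] with n ⟨k, hk⟩
  have hkn : k + 1 ≤ 2 ^ n := by
    have hpos : (0 : ℝ) < 2 ^ n := by positivity
    have hlt := (hk (right_mem_Icc.2 (by gcongr; linarith))).2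
    rw [div_lt_iff₀ hpos] at hlt
    have : ((k + 1 : ℕ) : ℝ) ≤ 2 ^ n := by push_cast; nlinarith
    exact_mod_cast this
  exact (Icc_subset_image_iterate_dyadic hkn).trans <| image_mono <|
    hk.trans <| hab.trans <| inter_subset_inter_right _ Ioo_subset_Icc_self

lemma eventually_residual_frequently_iterate_mem {O : ℕ → Set ℝ} (hO : ∀ n, IsOpen (O n))
    (hne : ∀ n, (O n ∩ Icc 0 1).Nonempty) :
    ∀ᶠ y in residual ℝ, y ∈ Icc 0 1 → ∃ᶠ n in atTop, tentMap^[n] y ∈ O n := by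
  suffices ∀ N, ∀ᶠ y in residual ℝ, y ∈ Icc 0 1 → ∃ n ≥ N, tentMap^[n] y ∈ O n from
    (eventually_countable_forall.2 this).mono fun y hy hy01 =>
      frequently_atTop.2 fun N => hy N hy01
  intro N
  -- padding with the complement of `[0,1]` makes the set dense in all of `ℝ`
  set S := (⋃ n ≥ N, tentMap^[n] ⁻¹' O n) ∪ (Icc 0 1)ᶜ
  have hS : IsOpen S :=
    (isOpen_biUnion fun n _ => (hO n).preimage (continuous_tentMap.iterate n)).union
      isClosed_Icc.isOpen_compl
  have hdense : Dense S := by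
    refine dense_iff_inter_open.2 fun W hW ⟨w, hw⟩ => ?_
    by_cases h : (W ∩ Icc 0 1).Nonempty
    · obtain ⟨n, hsurj, hnN⟩ :=
        ((eventually_Icc_subset_image_iterate hW h).and (eventually_ge_atTop N)).exists
      obtain ⟨c, hcO, hc⟩ := hne n
      obtain ⟨y, ⟨hyW, -⟩, rfl⟩ := hsurj hc
      exact ⟨y, hyW, Or.inl (mem_biUnion hnN hcO)⟩
    · exact ⟨w, hw, Or.inr fun hw' => h ⟨w, hw, hw'⟩⟩
  refine mem_of_superset (residual_of_dense_open hS hdense) fun y hy hy01 => ?_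
  simpa [S, hy01] using hy

lemma closedBall_quarter_compl_inter_Icc_nonempty (t : ℝ) :
    ((closedBall t (1 / 4))ᶜ ∩ Icc 0 1).Nonempty := by
  rcases le_or_gt t (1 / 2) with h | h
  · refine ⟨1, ?_, right_mem_Icc.2 zero_le_one⟩
    simp only [mem_compl_iff, mem_closedBall, Real.dist_eq, not_le]
    rw [abs_of_pos (by linarith)]
    linarith
  · refine ⟨0, ?_, left_mem_Icc.2 zero_le_one⟩
    simp only [mem_compl_iff, mem_closedBall, Real.dist_eq, not_le]
    rw [abs_of_neg (by linarith)]
    linarith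

lemma liminf_eq_zero_of_frequently_lt {ι : Type*} {l : Filter ι} {u : ι → ℝ}
    (h0 : ∀ᶠ i in l, 0 ≤ u i) (h : ∀ ε > 0, ∃ᶠ i in l, u i < ε) : liminf u l = 0 := by
  have hbdd : IsBoundedUnder (· ≥ ·) l u := ⟨0, h0⟩
  refine le_antisymm (le_of_forall_gt_imp_ge_of_dense fun ε hε => ?_) ?_
  · exact liminf_le_of_frequently_le ((h ε hε).mono fun _ => le_of_lt) hbdd
  · have hcobdd : IsCoboundedUnder (· ≥ ·) l u :=
      .of_frequently_le ((h 1 one_pos).mono fun _ => le_of_lt)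
    exact le_liminf_of_le hcobdd h0

/-- The tent map is chaotic on `[0,1]`: there exists `δ > 0` such that for every
`x ∈ [0,1]` and every nonempty (relatively) open subset `V` of `[0,1]` there is
`y ∈ V` with `limsup |Tⁿx - Tⁿy| ≥ δ` and `liminf |Tⁿx - Tⁿy| = 0`. -/
theorem tent_chaotic :
    ∃ δ : ℝ, 0 < δ ∧
      ∀ x ∈ Set.Icc (0 : ℝ) 1, ∀ V : Set ℝ, V ⊆ Set.Icc (0 : ℝ) 1 →
        (∃ U : Set ℝ, IsOpen U ∧ V = Set.Icc (0 : ℝ) 1 ∩ U) → V.Nonempty →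
        ∃ y ∈ V,
          δ ≤ limsup (fun n => |tentMap^[n] x - tentMap^[n] y|) atTop ∧
          liminf (fun n => |tentMap^[n] x - tentMap^[n] y|) atTop = 0 := by
  refine ⟨1 / 4, by norm_num, fun x hx V _ ⟨U, hU, hVU⟩ hV => ?_⟩
  have hTx (n : ℕ) : tentMap^[n] x ∈ Icc (0 : ℝ) 1 := tentMap_mapsTo.iterate n hx
  have hclose (i : ℕ) : ∀ᶠ y in residual ℝ, y ∈ Icc 0 1 →
      ∃ᶠ n in atTop, tentMap^[n] y ∈ ball (tentMap^[n] x) (1 / (i + 1)) :=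
    eventually_residual_frequently_iterate_mem (fun _ => isOpen_ball)
      fun n => ⟨_, mem_ball_self (by positivity), hTx n⟩
  have hfar : ∀ᶠ y in residual ℝ, y ∈ Icc 0 1 →
      ∃ᶠ n in atTop, tentMap^[n] y ∈ (closedBall (tentMap^[n] x) (1 / 4))ᶜ :=
    eventually_residual_frequently_iterate_mem (fun _ => isClosed_closedBall.isOpen_compl)
      fun n => closedBall_quarter_compl_inter_Icc_nonempty _
  obtain ⟨y, ⟨hyU, hy⟩, hyclose, hyfar⟩ :=
    (dense_of_mem_residual ((eventually_countable_forall.2 hclose).and hfar)).inter_open_nonempty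
      _ (hU.inter isOpen_Ioo) (hU.inter_Ioo_nonempty_of_inter_Icc (by rwa [inter_comm, ← hVU]))
  have hy01 : y ∈ Icc (0 : ℝ) 1 := Ioo_subset_Icc_self hy
  have hTy (n : ℕ) : tentMap^[n] y ∈ Icc (0 : ℝ) 1 := tentMap_mapsTo.iterate n hy01
  refine ⟨y, hVU ▸ ⟨hy01, hyU⟩, ?_, ?_⟩ <;> simp only [← Real.dist_eq]
  · refine le_limsup_of_frequently_le ((hyfar hy01).mono fun n hn => ?_) <|
      isBoundedUnder_of ⟨1, fun n => Real.dist_le_of_mem_Icc_01 (hTx n) (hTy n)⟩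
    rw [mem_compl_iff, mem_closedBall', not_le] at hn
    exact hn.le
  · refine liminf_eq_zero_of_frequently_lt (.of_forall fun _ => dist_nonneg) fun ε hε => ?_
    obtain ⟨i, hi⟩ := exists_nat_one_div_lt hε
    exact (hyclose i hy01).mono fun n hn => (mem_ball'.1 hn).trans hi
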